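/- Let A be a Banach algebra and let n ≥ 2 be an even integer. Suppose the left weak topological center of A^(n) (with the first Arens product) is all of A^(n), i.e., Z̃₁ℓ(A^(n)) = A^(n). If A^(n) is weakly amenable, then A^(n-2) is weakly amenable. -/

import Mathlib

open NormedSpace Filter Topology

noncomputable section

universe u

/-- The Arens adjoint of a bounded bilinear map `m : X × Y → Z`:
`⟨adjB m z' x, y⟩ = ⟨z', m x y⟩`.  Its triple iterate `adjB (adjB (adjB m))` is the Arens
(triple adjoint) extension `m*** : X** × Y** → Z**`; for `m` the multiplication of a Banach
algebra this is the first Arens product on the bidual. -/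
def adjB {X Y Z : Type*} [NormedAddCommGroup X] [NormedSpace ℂ X]
    [NormedAddCommGroup Y] [NormedSpace ℂ Y] [NormedAddCommGroup Z] [NormedSpace ℂ Z]
    (m : X →L[ℂ] Y →L[ℂ] Z) : StrongDual ℂ Z →L[ℂ] X →L[ℂ] StrongDual ℂ Y :=
  ((ContinuousLinearMap.compL ℂ X (Y →L[ℂ] Z) (Y →L[ℂ] ℂ)).flip m).comp
    (ContinuousLinearMap.compL ℂ Y Z ℂ)

/-- A Banach algebra recorded through its bounded bilinear multiplication map. -/
structure BAlg : Type (u + 1) where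
  X : Type u
  [nX : NormedAddCommGroup X]
  [mX : NormedSpace ℂ X]
  mul : X →L[ℂ] X →L[ℂ] X

attribute [instance] BAlg.nX BAlg.mX

/-- Passage to the bidual, with the first Arens product. -/
def BAlg.bidual (P : BAlg) : BAlg where
  X := StrongDual ℂ (StrongDual ℂ P.X)
  mul := adjB (adjB (adjB P.mul))

/-- `P.iter j` is `A^(2j)`: the `2j`-th dual with the iterated first Arens product. -/
def BAlg.iter (P : BAlg) : ℕ → BAlg
  | 0 => P
  | k + 1 => (P.iter k).bidual

variable (A : Type u) [NonUnitalNormedRing A] [NormedSpace ℂ A]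
  [SMulCommClass ℂ A A] [IsScalarTower ℂ A A] [CompleteSpace A]

/-- The base algebra `A^(0) = A`. -/
def baseAlg : BAlg where
  X := A
  mul := ContinuousLinearMap.mul ℂ A

/-- `D : X → X*` is a derivation for the algebra structure `M` on `X`, where `X*` carries the
dual bimodule structure `(x·f)(y) = f(yx)`, `(f·x)(y) = f(xy)`. -/
def IsDerivation {X : Type*} [NormedAddCommGroup X] [NormedSpace ℂ X]
    (M : X →L[ℂ] X →L[ℂ] X) (D : X →L[ℂ] StrongDual ℂ X) : Prop :=
  ∀ x y : X, D (M x y) = (D y).comp (M.flip x) + (D x).comp (M y)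

/-- `D : X → X*` is inner: `D x = x·f − f·x` for some `f ∈ X*`. -/
def IsInner {X : Type*} [NormedAddCommGroup X] [NormedSpace ℂ X]
    (M : X →L[ℂ] X →L[ℂ] X) (D : X →L[ℂ] StrongDual ℂ X) : Prop :=
  ∃ f : StrongDual ℂ X, ∀ x : X, D x = f.comp (M.flip x) - f.comp (M x)

/-- Weak amenability of the algebra `(X, M)`: every bounded derivation into `X*` is inner. -/
def WeaklyAmenable {X : Type*} [NormedAddCommGroup X] [NormedSpace ℂ X]
    (M : X →L[ℂ] X →L[ℂ] X) : Prop :=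
  ∀ D : X →L[ℂ] StrongDual ℂ X, IsDerivation M D → IsInner M D

/-!
A bounded derivation `D : A → A*` has a second adjoint `D'' : A** → A***`. For `x ∈ A` both
sides of `D''(xy)(z) = D''(y)(zx) + D''(x)(yz)` are weak*-continuous in `y`, and since the left
weak topological centre is all of `A**` they are also weak*-continuous in `x`; weak*-density of
`A` in `A**` (Goldstine, via the exact form of Helly's lemma) thus propagates the derivation
identity from `A` to `A**`. Weak amenability of `A**` makes `D''` inner, implemented by some
`f ∈ A***`, and the restriction of `f` to `A` implements `D`.
-/

section Bidual

variable {𝕜 E : Type*} [NontriviallyNormedField 𝕜] [SeminormedAddCommGroup E] [NormedSpace 𝕜 E]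

theorem exists_forall_apply_eq_bidual (x : StrongDual 𝕜 (StrongDual 𝕜 E))
    (s : Finset (StrongDual 𝕜 E)) : ∃ a : E, ∀ f ∈ s, f a = x f := by
  set Φ := Fintype.linearCombination 𝕜 (fun f : s => (f : StrongDual 𝕜 E))
  set L : E →ₗ[𝕜] Module.Dual 𝕜 (s → 𝕜) := ((ContinuousLinearMap.coeLM 𝕜) ∘ₗ Φ).flip
  have hker : ⨅ a, LinearMap.ker (L a) ≤ LinearMap.ker ((x : _ →ₗ[𝕜] 𝕜) ∘ₗ Φ) := by
    intro c hc
    have hΦ : Φ c = 0 := ContinuousLinearMap.ext fun a => (Submodule.mem_iInf _).1 hc a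
    simp [hΦ]
  have hspan := FiniteDimensional.mem_span_of_iInf_ker_le_ker hker
  rw [← LinearMap.coe_range, Submodule.span_eq] at hspan
  obtain ⟨a, ha⟩ := hspan
  refine ⟨a, fun f hf => ?_⟩
  classical
  simpa [L, Φ] using LinearMap.congr_fun ha (Pi.single ⟨f, hf⟩ 1)

theorem denseRange_inclusionInDoubleDualWeak : DenseRange (inclusionInDoubleDualWeak 𝕜 E) := by
  intro x
  have hind : IsInducing fun (w : WeakDual 𝕜 (StrongDual 𝕜 E)) (f : StrongDual 𝕜 E) => w f :=
    ⟨rfl⟩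
  rw [hind.closure_eq_preimage_closure_image, Set.mem_preimage]
  refine mem_closure_iff.2 fun o ho hxo => ?_
  obtain ⟨I, u, hu, hIu⟩ := isOpen_pi_iff.1 ho _ hxo
  obtain ⟨a, ha⟩ := exists_forall_apply_eq_bidual x I
  refine ⟨_, hIu fun f hf => ?_, Set.mem_image_of_mem _ (Set.mem_range_self a)⟩
  change f a ∈ u f
  exact ha f hf ▸ (hu f hf).2

theorem eq_of_eq_on_inclusionInDoubleDual {α : Type*} [TopologicalSpace α] [T2Space α]
    {g h : WeakDual 𝕜 (StrongDual 𝕜 E) → α} (hg : Continuous g) (hh : Continuous h)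
    (H : ∀ a : E, g (inclusionInDoubleDual 𝕜 E a) = h (inclusionInDoubleDual 𝕜 E a)) :
    g = h :=
  denseRange_inclusionInDoubleDualWeak.equalizer hg hh (funext H)

end Bidual

def ContinuousLinearMap.dualMap {𝕜 X Y : Type*} [NontriviallyNormedField 𝕜]
    [SeminormedAddCommGroup X] [NormedSpace 𝕜 X] [SeminormedAddCommGroup Y] [NormedSpace 𝕜 Y]
    (T : X →L[𝕜] Y) : StrongDual 𝕜 Y →L[𝕜] StrongDual 𝕜 X :=
  precomp 𝕜 T

theorem adjB_adjB_adjB_inclusionInDoubleDual {X Y Z : Type*} [NormedAddCommGroup X]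
    [NormedSpace ℂ X] [NormedAddCommGroup Y] [NormedSpace ℂ Y] [NormedAddCommGroup Z]
    [NormedSpace ℂ Z] (m : X →L[ℂ] Y →L[ℂ] Z) (a : X) (b : Y) :
    adjB (adjB (adjB m)) (inclusionInDoubleDual ℂ X a) (inclusionInDoubleDual ℂ Y b) =
      inclusionInDoubleDual ℂ Z (m a b) :=
  rfl

section Arens

open ContinuousLinearMap

variable {E : Type*} [NormedAddCommGroup E] [NormedSpace ℂ E] (M : E →L[ℂ] E →L[ℂ] E)

local notation "ι" => inclusionInDoubleDual ℂ E

theorem isDerivation_adjB_adjB_adjB {D : E →L[ℂ] StrongDual ℂ E} (hD : IsDerivation M D)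
    (hz : ∀ x : StrongDual ℂ (StrongDual ℂ E),
      Continuous fun y : WeakDual ℂ (StrongDual ℂ E) =>
        (adjB (adjB (adjB M)) x y : WeakSpace ℂ (StrongDual ℂ (StrongDual ℂ E)))) :
    IsDerivation (adjB (adjB (adjB M))) D.dualMap.dualMap := by
  set P := adjB (adjB (adjB M))
  set D₂ := D.dualMap.dualMap
  intro x y
  ext z
  have h_inclusion (a : E) (y) : D₂ (P (ι a) y) z = D₂ y (P z (ι a)) + D₂ (ι a) (P y z) := by
    refine congrFun (eq_of_eq_on_inclusionInDoubleDual (g := fun y => D₂ (P (ι a) y) z)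
      (h := fun y => D₂ y (P z (ι a)) + D₂ (ι a) (P y z))
      (WeakDual.eval_continuous (adjB M (D.dualMap z) a))
      ((WeakDual.eval_continuous _).add (WeakDual.eval_continuous (adjB (adjB M) z (D a))))
      fun b => ?_) y
    change z (D (M a b)) = z ((D b).comp (M.flip a)) + z ((D a).comp (M b))
    rw [hD, map_add]
  refine congrFun (eq_of_eq_on_inclusionInDoubleDual (g := fun x => D₂ (P x y) z)
    (h := fun x => D₂ y (P z x) + D₂ x (P y z))
    (WeakDual.eval_continuous (adjB (adjB M) y (D.dualMap z)))
    (((D₂ y).continuous.comp (hz z)).add (WeakDual.eval_continuous _)) fun a => h_inclusion a y) x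

theorem IsInner.of_adjB_adjB_adjB {D : E →L[ℂ] StrongDual ℂ E}
    (h : IsInner (adjB (adjB (adjB M))) D.dualMap.dualMap) : IsInner M D := by
  obtain ⟨f, hf⟩ := h
  refine ⟨f.comp ι, fun a => ext fun b => ?_⟩
  have hab := DFunLike.congr_fun (hf (ι a)) (ι b)
  simp only [sub_apply, comp_apply, flip_apply, adjB_adjB_adjB_inclusionInDoubleDual] at hab
  exact hab

theorem WeaklyAmenable.of_adjB_adjB_adjB
    (hz : ∀ x : StrongDual ℂ (StrongDual ℂ E),
      Continuous fun y : WeakDual ℂ (StrongDual ℂ E) =>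
        (adjB (adjB (adjB M)) x y : WeakSpace ℂ (StrongDual ℂ (StrongDual ℂ E))))
    (hwa : WeaklyAmenable (adjB (adjB (adjB M)))) : WeaklyAmenable M :=
  fun _ hD => (hwa _ (isDerivation_adjB_adjB_adjB M hD hz)).of_adjB_adjB_adjB M

end Arens

-- `A^(n-2)` is `(baseAlg A).iter j`, so `n = 2 * j + 2`.
/-- with `n = 2*(j+1) ≥ 2` even; `S` is level `n-2`, so
`A^(n) = (S.X)**` carries the first Arens product `adjB³ S.mul`: if
`Z̃₁ℓ(A^(n)) = A^(n)` (for every `x ∈ A^(n)` the map `y ↦ xy` is weak*-to-weak continuous)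
and `A^(n)` is weakly amenable, then `A^(n-2)` is weakly amenable. -/
theorem stmt17 (j : ℕ)
    (hz : ∀ x : StrongDual ℂ (StrongDual ℂ (baseAlg A |>.iter j).X),
      Continuous fun y : WeakDual ℂ (StrongDual ℂ (baseAlg A |>.iter j).X) =>
        (adjB (adjB (adjB (baseAlg A |>.iter j).mul)) x y :
          WeakSpace ℂ (StrongDual ℂ (StrongDual ℂ (baseAlg A |>.iter j).X))))
    (hwa : WeaklyAmenable (X := StrongDual ℂ (StrongDual ℂ (baseAlg A |>.iter j).X))
      (adjB (adjB (adjB (baseAlg A |>.iter j).mul)))) :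
    WeaklyAmenable (X := (baseAlg A |>.iter j).X) (baseAlg A |>.iter j).mul :=
  WeaklyAmenable.of_adjB_adjB_adjB _ hz hwa

end
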